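/- arXiv:1310.7166 — 3 statements merged into one kernel-verified Lean document; each statement's English description precedes it below -/
import Mathlib

section
/- Let f : ℝ → ℂ be a Schwartz function, let a ∈ ℝ, and set g(x) = exp( i·a·∫_{−∞}^x |f(y)|² dy )·f(x). Then ∫_ℝ |f′|² dx + (3/2)·Im ∫_ℝ |f|²·f·conj(f′) dx + (1/2)∫_ℝ |f|⁶ dx = ∫_ℝ |g′|² dx + (2a + 3/2)·Im ∫_ℝ |g|²·g·conj(g′) dx + (a² + (3/2)a + 1/2)·∫_ℝ |g|⁶ dx. -/
/-!
With `Φ x = ∫_{-∞}^x |f|²` we have `Φ' = |f|²`, so `g = e^{iaΦ} f` satisfies `|g| = |f|` and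
`g' = e^{iaΦ} (f' + i a |f|² f)`. Pointwise this gives `|g'|² = |f'|² + a² |f|⁶ - 2a Im (|f|² f conj f')`
and `|g|² g conj g' = |f|² f conj f' - i a |f|⁶`. After integrating, the coefficients match:
`-2a + (2a + 3/2) = 3/2` in front of `Im ∫ |f|² f conj f'` and
`a² - a (2a + 3/2) + (a² + (3/2) a + 1/2) = 1/2` in front of `∫ |f|⁶`.
-/

open MeasureTheory ComplexConjugate

noncomputable section

open Complex

theorem hasDerivAt_integral_Iic {E : Type*} [NormedAddCommGroup E] [NormedSpace ℝ E]
    [CompleteSpace E] {ρ : ℝ → E} (hρ : Integrable ρ) {x : ℝ} (hx : ContinuousAt ρ x) :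
    HasDerivAt (fun t => ∫ y in Set.Iic t, ρ y) (ρ x) x := by
  have h := (intervalIntegral.integral_hasDerivAt_right (a := 0) hρ.intervalIntegrable
    hρ.aestronglyMeasurable.stronglyMeasurableAtFilter hx).const_add (∫ y in Set.Iic 0, ρ y)
  refine h.congr_of_eventuallyEq (Filter.Eventually.of_forall fun t => ?_)
  dsimp only
  rw [← intervalIntegral.integral_Iic_sub_Iic hρ.integrableOn hρ.integrableOn]
  abel

theorem norm_sq_mul_add_I_mul {u : ℂ} (hu : ‖u‖ = 1) (a : ℝ) (c d : ℂ) :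
    ‖u * (d + I * a * (‖c‖ : ℂ) ^ 2 * c)‖ ^ 2
      = ‖d‖ ^ 2 + a ^ 2 * ‖c‖ ^ 6 - 2 * a * ((‖c‖ : ℂ) ^ 2 * c * conj d).im := by
  have hsq : ∀ z : ℂ, ‖z‖ ^ 2 = z.re ^ 2 + z.im ^ 2 := fun z => by
    rw [← normSq_eq_norm_sq, normSq_apply]; ring
  rw [norm_mul, hu, one_mul, show ‖c‖ ^ 6 = (‖c‖ ^ 2) ^ 3 by ring]
  simp only [← ofReal_pow, hsq, add_re, add_im, mul_re, mul_im, I_re, I_im, ofReal_re, ofReal_im,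
    conj_re, conj_im]
  ring

theorem norm_sq_mul_mul_conj_mul_add_I_mul {u : ℂ} (hu : ‖u‖ = 1) (a : ℝ) (c d : ℂ) :
    (‖u * c‖ : ℂ) ^ 2 * (u * c) * conj (u * (d + I * a * (‖c‖ : ℂ) ^ 2 * c))
      = (‖c‖ : ℂ) ^ 2 * c * conj d - I * a * (‖c‖ : ℂ) ^ 6 := by
  have hu' : u * conj u = 1 := by rw [mul_conj', hu]; norm_num
  have hc : c * conj c = (‖c‖ : ℂ) ^ 2 := mul_conj' c
  rw [norm_mul, hu, one_mul]
  simp only [map_mul, map_add, map_pow, conj_ofReal, conj_I]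
  linear_combination ((‖c‖ : ℂ) ^ 2 * c * (conj d - I * a * (‖c‖ : ℂ) ^ 2 * conj c)) * hu'
    + (-I * a * (‖c‖ : ℂ) ^ 4) * hc

def gaugePhase (a : ℝ) (f : ℝ → ℂ) (x : ℝ) : ℂ :=
  exp (I * a * ((∫ y in Set.Iic x, ‖f y‖ ^ 2 : ℝ) : ℂ))

def gaugeTransform (a : ℝ) (f : ℝ → ℂ) (x : ℝ) : ℂ :=
  gaugePhase a f x * f x

theorem norm_gaugePhase (a : ℝ) (f : ℝ → ℂ) (x : ℝ) : ‖gaugePhase a f x‖ = 1 := by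
  simpa [gaugePhase, mul_assoc] using norm_exp_I_mul_ofReal (a * ∫ y in Set.Iic x, ‖f y‖ ^ 2)

theorem norm_gaugeTransform (a : ℝ) (f : ℝ → ℂ) (x : ℝ) : ‖gaugeTransform a f x‖ = ‖f x‖ := by
  rw [gaugeTransform, norm_mul, norm_gaugePhase, one_mul]

theorem hasDerivAt_gaugeTransform (a : ℝ) {f : ℝ → ℂ} (hf : Differentiable ℝ f)
    (hρ : Integrable fun y => ‖f y‖ ^ 2) (x : ℝ) :
    HasDerivAt (gaugeTransform a f)
      (gaugePhase a f x * (deriv f x + I * a * (‖f x‖ : ℂ) ^ 2 * f x)) x := by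
  have hΦ :=
    (hasDerivAt_integral_Iic (x := x) hρ (hf.continuous.norm.pow 2).continuousAt).ofReal_comp
  refine ((hΦ.const_mul (I * a)).cexp.mul (hf x).hasDerivAt).congr_deriv ?_
  simp only [gaugePhase, ofReal_pow]
  ring

theorem integrable_norm_sq_mul_mul_conj {α : Type*} [MeasurableSpace α] {μ : Measure α}
    {f h : α → ℂ} (hf : AEStronglyMeasurable f μ) {M : ℝ} (hM : ∀ x, ‖f x‖ ≤ M)
    (hh : Integrable h μ) : Integrable (fun x => (‖f x‖ : ℂ) ^ 2 * f x * conj (h x)) μ := by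
  refine (hh.norm.const_mul (M ^ 3)).mono' ?_ (ae_of_all _ fun x => ?_)
  · exact ((continuous_ofReal.comp_aestronglyMeasurable hf.norm).pow 2).mul hf |>.mul
      (continuous_conj.comp_aestronglyMeasurable hh.1)
  · simp only [norm_mul, norm_pow, norm_real, norm_norm, RCLike.norm_conj, ← pow_succ]
    gcongr
    exact hM x

section

variable (a : ℝ) {f : ℝ → ℂ}

theorem integral_norm_sq_deriv_gaugeTransform (hf : Differentiable ℝ f)
    (hρ : Integrable fun x => ‖f x‖ ^ 2) (hd : Integrable fun x => ‖deriv f x‖ ^ 2)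
    (h6 : Integrable fun x => ‖f x‖ ^ 6)
    (hv : Integrable fun x => (‖f x‖ : ℂ) ^ 2 * f x * conj (deriv f x)) :
    ∫ x, ‖deriv (gaugeTransform a f) x‖ ^ 2
      = (∫ x, ‖deriv f x‖ ^ 2) + a ^ 2 * (∫ x, ‖f x‖ ^ 6)
        - 2 * a * (∫ x, (‖f x‖ : ℂ) ^ 2 * f x * conj (deriv f x)).im := by
  have hpt : ∀ x, ‖deriv (gaugeTransform a f) x‖ ^ 2 = ‖deriv f x‖ ^ 2 + a ^ 2 * ‖f x‖ ^ 6
      - 2 * a * ((‖f x‖ : ℂ) ^ 2 * f x * conj (deriv f x)).im := fun x => by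
    rw [(hasDerivAt_gaugeTransform a hf hρ x).deriv]
    exact norm_sq_mul_add_I_mul (norm_gaugePhase a f x) a (f x) (deriv f x)
  simp_rw [hpt]
  rw [integral_sub, integral_add hd (h6.const_mul _), integral_const_mul, integral_const_mul]
  · congr 2
    exact integral_im hv
  · exact hd.add (h6.const_mul _)
  · exact hv.im.const_mul _

theorem im_integral_norm_sq_mul_mul_conj_deriv_gaugeTransform (hf : Differentiable ℝ f)
    (hρ : Integrable fun x => ‖f x‖ ^ 2) (h6 : Integrable fun x => ‖f x‖ ^ 6)
    (hv : Integrable fun x => (‖f x‖ : ℂ) ^ 2 * f x * conj (deriv f x)) :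
    (∫ x, (‖gaugeTransform a f x‖ : ℂ) ^ 2 * gaugeTransform a f x
        * conj (deriv (gaugeTransform a f) x)).im
      = (∫ x, (‖f x‖ : ℂ) ^ 2 * f x * conj (deriv f x)).im - a * ∫ x, ‖f x‖ ^ 6 := by
  have hpt : ∀ x, (‖gaugeTransform a f x‖ : ℂ) ^ 2 * gaugeTransform a f x
      * conj (deriv (gaugeTransform a f) x)
      = (‖f x‖ : ℂ) ^ 2 * f x * conj (deriv f x) - I * a * ((‖f x‖ ^ 6 : ℝ) : ℂ) := fun x => by
    rw [(hasDerivAt_gaugeTransform a hf hρ x).deriv, ofReal_pow]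
    exact norm_sq_mul_mul_conj_mul_add_I_mul (norm_gaugePhase a f x) a (f x) (deriv f x)
  simp_rw [hpt]
  rw [integral_sub hv, integral_const_mul, integral_complex_ofReal]
  · simp
  · exact h6.ofReal.const_mul _

end

theorem integral_norm_pow_gaugeTransform (a : ℝ) (f : ℝ → ℂ) (p : ℕ) :
    ∫ x, ‖gaugeTransform a f x‖ ^ p = ∫ x, ‖f x‖ ^ p := by
  simp_rw [norm_gaugeTransform]

/-- The DNLS energy expressed through the gauge transform
`g = 𝒢ₐ f`: for any Schwartz `f` and `a ∈ ℝ`,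
`E_D(f) = ∫|g′|² + (2a + 3/2) Im ∫ |g|² g conj(g′) + (a² + (3/2)a + 1/2) ∫ |g|⁶`. -/
theorem gauge_energy_identity (f : SchwartzMap ℝ ℂ) (a : ℝ) (g : ℝ → ℂ)
    (hg : ∀ x : ℝ, g x
      = Complex.exp (Complex.I * (a : ℂ) *
          ((∫ y in Set.Iic x, ‖f y‖ ^ 2 : ℝ) : ℂ)) * f x) :
    (∫ x : ℝ, ‖deriv (fun y : ℝ => f y) x‖ ^ 2)
      + (3/2) * (∫ x : ℝ, (‖f x‖ : ℂ) ^ 2 * f x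
          * conj (deriv (fun y : ℝ => f y) x)).im
      + (1/2) * (∫ x : ℝ, ‖f x‖ ^ 6)
    = (∫ x : ℝ, ‖deriv g x‖ ^ 2)
      + (2 * a + 3/2) * (∫ x : ℝ, (‖g x‖ : ℂ) ^ 2 * g x * conj (deriv g x)).im
      + (a ^ 2 + (3/2) * a + 1/2) * (∫ x : ℝ, ‖g x‖ ^ 6) := by
  obtain rfl : g = gaugeTransform a f := funext hg
  have hρ := (f.memLp (2 : ℕ)).integrable_norm_pow two_ne_zero
  have h6 := (f.memLp (6 : ℕ)).integrable_norm_pow (by norm_num)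
  have hd := ((SchwartzMap.derivCLM ℝ ℂ f).memLp (2 : ℕ)).integrable_norm_pow two_ne_zero
  have hv := integrable_norm_sq_mul_mul_conj f.continuous.aestronglyMeasurable
    (f.norm_le_seminorm ℝ) (SchwartzMap.derivCLM ℝ ℂ f).integrable (μ := volume)
  rw [integral_norm_sq_deriv_gaugeTransform a f.differentiable hρ hd h6 hv,
    im_integral_norm_sq_mul_mul_conj_deriv_gaugeTransform a f.differentiable hρ h6 hv,
    integral_norm_pow_gaugeTransform]
  ring
end
end

section
/- Let Q : ℝ → ℝ be a ground state, i.e. Q is twice continuously differentiable, positive everywhere, Q(x) → 0 and Q′(x) → 0 as |x| → ∞, and Q satisfies −Q″ + Q − (3/16)Q⁵ = 0 on ℝ. Then ∫_ℝ Q(x)² dx = 2π, and the energy of Q vanishes: ∫_ℝ Q′(x)² dx = (1/16)∫_ℝ Q(x)⁶ dx. -/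
/-!
Multiplying the equation by `Q′` gives the first integral `Q′² = Q² − Q⁶/16`. Hence the
logarithmic derivative `ψ = Q′/Q` satisfies `ψ² = 1 − Q⁴/16` and the Riccati equation
`ψ′ = −Q⁴/8`, so `ψ` decreases from `1` to `−1` and `θ = arccos ψ` increases from `0` to `π`
with `θ′ = Q²/2`: the mass is `2π`. Integrating `(Q Q′)′ = 2Q² − Q⁶/4` over the line gives
`∫ Q⁶ = 8 ∫ Q² = 16π`, and the first integral turns this into the vanishing of the energy.
-/

open MeasureTheory ComplexConjugate

noncomputable section

/-- `Q` is a ground state: positive, `C²`, vanishing (with its derivative) at infinity,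
solving `−Q″ + Q − (3/16)Q⁵ = 0`. -/
structure IsGroundState (Q : ℝ → ℝ) : Prop where
  smooth : ContDiff ℝ 2 Q
  pos : ∀ x : ℝ, 0 < Q x
  decay : Filter.Tendsto Q (Filter.cocompact ℝ) (nhds 0)
  decay_deriv : Filter.Tendsto (deriv Q) (Filter.cocompact ℝ) (nhds 0)
  eqn : ∀ x : ℝ, - deriv (deriv Q) x + Q x - (3/16) * (Q x) ^ 5 = 0

open Filter Set Real Topology

theorem integrable_deriv_of_nonneg {g g' : ℝ → ℝ} {m n : ℝ}
    (hderiv : ∀ x, HasDerivAt g (g' x) x) (hg' : ∀ x, 0 ≤ g' x)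
    (hbot : Tendsto g atBot (𝓝 m)) (htop : Tendsto g atTop (𝓝 n)) : Integrable g' := by
  have hint (s t : ℝ) : IntervalIntegrable g' volume s t :=
    intervalIntegral.intervalIntegrable_deriv_of_nonneg
      (fun x _ ↦ (hderiv x).continuousAt.continuousWithinAt) (fun x _ ↦ hderiv x)
      (fun x _ ↦ hg' x)
  refine integrable_of_intervalIntegral_norm_tendsto (n - m) (fun i ↦ (hint (-i) i).1)
    tendsto_neg_atTop_atBot tendsto_id ?_
  have hftc (i : ℝ) : ∫ x in -i..id i, ‖g' x‖ = g i - g (-i) := by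
    simp_rw [Real.norm_of_nonneg (hg' _)]
    exact intervalIntegral.integral_eq_sub_of_hasDerivAt (fun x _ ↦ hderiv x) (hint _ _)
  exact (htop.sub (hbot.comp tendsto_neg_atTop_atBot)).congr fun i ↦ (hftc i).symm

theorem eq_of_forall_hasDerivAt_zero_of_tendsto {E : Type*} [NormedAddCommGroup E]
    [NormedSpace ℝ E] {f : ℝ → E} {l : Filter ℝ} [l.NeBot] {c : E}
    (hf : ∀ x, HasDerivAt f 0 x) (hlim : Tendsto f l (𝓝 c)) (x : ℝ) : f x = c := by
  have hconst : f = fun _ ↦ f x :=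
    funext fun y ↦ is_const_of_deriv_eq_zero (fun z ↦ (hf z).differentiableAt)
      (fun z ↦ (hf z).deriv) y x
  rw [hconst] at hlim
  exact tendsto_nhds_unique tendsto_const_nhds hlim

theorem Antitone.tendsto_atTop_neg_one_of_sq {ψ : ℝ → ℝ} (hψ : Antitone ψ)
    (hlt : ∀ x, |ψ x| < 1) (hsq : Tendsto (fun x ↦ ψ x ^ 2) atTop (𝓝 1)) :
    Tendsto ψ atTop (𝓝 (-1)) := by
  have hbdd : BddBelow (range ψ) := ⟨-1, by rintro _ ⟨x, rfl⟩; exact (abs_lt.1 (hlt x)).1.le⟩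
  have hinf := tendsto_atTop_ciInf hψ hbdd
  have hinf_sq : (⨅ x, ψ x) ^ 2 = 1 := tendsto_nhds_unique (hinf.pow 2) hsq
  have hinf_lt : ⨅ x, ψ x < 1 := (ciInf_le hbdd 0).trans_lt (abs_lt.1 (hlt 0)).2
  rcases sq_eq_one_iff.1 hinf_sq with h | h
  · exact absurd h hinf_lt.ne
  · rwa [h] at hinf

theorem Antitone.tendsto_atBot_one_of_sq {ψ : ℝ → ℝ} (hψ : Antitone ψ)
    (hlt : ∀ x, |ψ x| < 1) (hsq : Tendsto (fun x ↦ ψ x ^ 2) atBot (𝓝 1)) :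
    Tendsto ψ atBot (𝓝 1) := by
  have hbdd : BddAbove (range ψ) := ⟨1, by rintro _ ⟨x, rfl⟩; exact (abs_lt.1 (hlt x)).2.le⟩
  have hsup := tendsto_atBot_ciSup hψ hbdd
  have hsup_sq : (⨆ x, ψ x) ^ 2 = 1 := tendsto_nhds_unique (hsup.pow 2) hsq
  have hsup_gt : -1 < ⨆ x, ψ x := (abs_lt.1 (hlt 0)).1.trans_le (le_ciSup hbdd 0)
  rcases sq_eq_one_iff.1 hsup_sq with h | h
  · rwa [h] at hsup
  · exact absurd h hsup_gt.ne'

namespace IsGroundState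

variable {Q : ℝ → ℝ} (hQ : IsGroundState Q)
include hQ

theorem hasDerivAt (x : ℝ) : HasDerivAt Q (deriv Q x) x :=
  (hQ.smooth.differentiable two_ne_zero x).hasDerivAt

theorem hasDerivAt_deriv (x : ℝ) : HasDerivAt (deriv Q) (Q x - 3 / 16 * Q x ^ 5) x := by
  have hQ' : ContDiff ℝ 1 (deriv Q) := hQ.smooth.iterate_deriv' 1 1
  exact (hQ'.differentiable one_ne_zero x).hasDerivAt.congr_deriv (by linarith [hQ.eqn x])

theorem deriv_sq (x : ℝ) : deriv Q x ^ 2 = Q x ^ 2 - Q x ^ 6 / 16 := by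
  have hconserved : ∀ y, HasDerivAt (fun y ↦ deriv Q y ^ 2 - Q y ^ 2 + Q y ^ 6 / 16) 0 y := by
    intro y
    refine ((((hQ.hasDerivAt_deriv y).pow 2).sub ((hQ.hasDerivAt y).pow 2)).add
      (((hQ.hasDerivAt y).pow 6).div_const 16)).congr_deriv ?_
    ring
  have hlim : Tendsto (fun y ↦ deriv Q y ^ 2 - Q y ^ 2 + Q y ^ 6 / 16) (cocompact ℝ) (𝓝 0) := by
    simpa using ((hQ.decay_deriv.pow 2).sub (hQ.decay.pow 2)).add ((hQ.decay.pow 6).div_const 16)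
  linarith [eq_of_forall_hasDerivAt_zero_of_tendsto hconserved hlim x]

theorem logDeriv_sq (x : ℝ) : logDeriv Q x ^ 2 = 1 - Q x ^ 4 / 16 := by
  have hpos := hQ.pos x
  rw [logDeriv_apply, div_pow, hQ.deriv_sq x]
  field_simp

theorem abs_logDeriv_lt_one (x : ℝ) : |logDeriv Q x| < 1 := by
  rw [← sq_lt_one_iff_abs_lt_one, hQ.logDeriv_sq x]
  linarith [pow_pos (hQ.pos x) 4]

theorem hasDerivAt_logDeriv (x : ℝ) : HasDerivAt (logDeriv Q) (-(Q x ^ 4 / 8)) x := by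
  have hpos := hQ.pos x
  refine ((hQ.hasDerivAt_deriv x).div (hQ.hasDerivAt x) hpos.ne').congr_deriv ?_
  field_simp
  linear_combination -128 * hQ.deriv_sq x

theorem antitone_logDeriv : Antitone (logDeriv Q) :=
  antitone_of_hasDerivAt_nonpos hQ.hasDerivAt_logDeriv
    fun x ↦ neg_nonpos.2 (by positivity [hQ.pos x])

theorem tendsto_logDeriv_sq : Tendsto (fun x ↦ logDeriv Q x ^ 2) (cocompact ℝ) (𝓝 1) := by
  simp_rw [hQ.logDeriv_sq]
  simpa using ((hQ.decay.pow 4).div_const 16).const_sub 1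

theorem hasDerivAt_arccos_logDeriv (x : ℝ) :
    HasDerivAt (fun x ↦ arccos (logDeriv Q x)) (Q x ^ 2 / 2) x := by
  have hψ := abs_lt.1 (hQ.abs_logDeriv_lt_one x)
  refine ((hasDerivAt_arccos hψ.1.ne' hψ.2.ne).comp x (hQ.hasDerivAt_logDeriv x)).congr_deriv ?_
  have hsqrt : √(1 - logDeriv Q x ^ 2) = Q x ^ 2 / 4 := by
    rw [hQ.logDeriv_sq x, show 1 - (1 - Q x ^ 4 / 16) = (Q x ^ 2 / 4) ^ 2 by ring]
    exact sqrt_sq (by positivity)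
  have hpos := hQ.pos x
  rw [hsqrt]
  field_simp
  ring

theorem tendsto_arccos_logDeriv_atTop :
    Tendsto (fun x ↦ arccos (logDeriv Q x)) atTop (𝓝 π) := by
  have hψ := hQ.antitone_logDeriv.tendsto_atTop_neg_one_of_sq hQ.abs_logDeriv_lt_one
    (hQ.tendsto_logDeriv_sq.mono_left atTop_le_cocompact)
  rw [← arccos_neg_one]
  exact (continuous_arccos.tendsto _).comp hψ

theorem tendsto_arccos_logDeriv_atBot :
    Tendsto (fun x ↦ arccos (logDeriv Q x)) atBot (𝓝 0) := by
  have hψ := hQ.antitone_logDeriv.tendsto_atBot_one_of_sq hQ.abs_logDeriv_lt_one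
    (hQ.tendsto_logDeriv_sq.mono_left atBot_le_cocompact)
  rw [← arccos_one]
  exact (continuous_arccos.tendsto _).comp hψ

theorem integrable_sq : Integrable fun x ↦ Q x ^ 2 := by
  have h := integrable_deriv_of_nonneg hQ.hasDerivAt_arccos_logDeriv (fun x ↦ by positivity)
    hQ.tendsto_arccos_logDeriv_atBot hQ.tendsto_arccos_logDeriv_atTop
  simpa [mul_div_cancel₀] using h.const_mul 2

theorem integral_sq : ∫ x, Q x ^ 2 = 2 * π := by
  have h := integral_of_hasDerivAt_of_tendsto hQ.hasDerivAt_arccos_logDeriv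
    (hQ.integrable_sq.div_const 2) hQ.tendsto_arccos_logDeriv_atBot
    hQ.tendsto_arccos_logDeriv_atTop
  rw [integral_div] at h
  linarith

theorem pow_four_le (x : ℝ) : Q x ^ 4 ≤ 16 := by
  linarith [hQ.logDeriv_sq x, sq_nonneg (logDeriv Q x)]

theorem integrable_pow_six : Integrable fun x ↦ Q x ^ 6 := by
  refine (hQ.integrable_sq.const_mul 16).mono' (hQ.smooth.continuous.pow 6).aestronglyMeasurable
    (ae_of_all _ fun x ↦ ?_)
  rw [Real.norm_of_nonneg (by positivity)]
  calc Q x ^ 6 = Q x ^ 2 * Q x ^ 4 := by ring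
    _ ≤ Q x ^ 2 * 16 := by gcongr; exact hQ.pow_four_le x
    _ = 16 * Q x ^ 2 := by ring

theorem hasDerivAt_mul_deriv (x : ℝ) :
    HasDerivAt (fun x ↦ Q x * deriv Q x) (2 * Q x ^ 2 - Q x ^ 6 / 4) x :=
  ((hQ.hasDerivAt x).mul (hQ.hasDerivAt_deriv x)).congr_deriv
    (by linear_combination hQ.deriv_sq x)

theorem integral_pow_six : ∫ x, Q x ^ 6 = 16 * π := by
  have hlim : Tendsto (fun x ↦ Q x * deriv Q x) (cocompact ℝ) (𝓝 0) := by
    simpa using hQ.decay.mul hQ.decay_deriv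
  have h := integral_of_hasDerivAt_of_tendsto hQ.hasDerivAt_mul_deriv
    ((hQ.integrable_sq.const_mul 2).sub (hQ.integrable_pow_six.div_const 4))
    (hlim.mono_left atBot_le_cocompact) (hlim.mono_left atTop_le_cocompact)
  rw [integral_sub (hQ.integrable_sq.const_mul 2) (hQ.integrable_pow_six.div_const 4),
    integral_const_mul, integral_div, hQ.integral_sq] at h
  linarith

end IsGroundState

open Filter Set Real Topology in
/-- A ground state has mass `2π` and vanishing energy. -/
theorem groundState_mass_and_energy (Q : ℝ → ℝ) (hQ : IsGroundState Q) :
    (∫ x : ℝ, Q x ^ 2) = 2 * Real.pi ∧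
    (∫ x : ℝ, deriv Q x ^ 2) = (1/16) * ∫ x : ℝ, Q x ^ 6 := by
  refine ⟨hQ.integral_sq, ?_⟩
  simp_rw [hQ.deriv_sq]
  rw [integral_sub hQ.integrable_sq (hQ.integrable_pow_six.div_const 16), integral_div,
    hQ.integral_sq, hQ.integral_pow_six]
  ring
end
end

section
/- For every ε > 0 there exists a Schwartz function f : ℝ → ℂ such that ∫_ℝ |f(x)|² dx < 2π + ε and its energy is negative: ∫_ℝ |f′(x)|² dx − (1/16)∫_ℝ |f(x)|⁶ dx < 0. -/
/-!
The ground state is `Q x = 2 (cosh 2x)^(-1/2)`, and its mass-preserving rescaling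
`x ↦ Q (x/2) / √2` is `√2 u` with `u x = (cosh x)^(-1/2)`. From `∫ sech = π`, `∫ sech³ = π/2`
and `u'² = sech · tanh² / 4 = (sech - sech³) / 4` one gets `∫ u² = π`, `∫ u'² = π/8`,
`∫ u⁶ = π/2`, so `c u` has mass `c² π` and energy `c² π (4 - c⁴) / 32`, negative once `c² > 2`;
`c² = 2 + ε/4` keeps the mass below `2π + ε`. The function `u` is Schwartz because each
derivative is `u` times a polynomial in `tanh`, and `|x|^k u x ≤ √(2 (2k)!)`.
-/

open MeasureTheory Real Filter Set Topology Polynomial Nat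
open scoped ContDiff SchwartzMap

noncomputable section

theorem Real.hasDerivAt_tanh (x : ℝ) : HasDerivAt tanh (1 - tanh x ^ 2) x := by
  have hc := (cosh_pos x).ne'
  rw [show tanh = fun y ↦ sinh y / cosh y from funext tanh_eq_sinh_div_cosh]
  refine ((hasDerivAt_sinh x).div (hasDerivAt_cosh x) hc).congr_deriv ?_
  field_simp

theorem Real.pow_abs_le_two_mul_factorial_mul_cosh (k : ℕ) (x : ℝ) :
    |x| ^ k ≤ 2 * k ! * cosh x := by
  have hexp : exp |x| ≤ 2 * cosh x := by
    rw [cosh_eq]; linarith [exp_abs_le x]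
  have := pow_div_factorial_le_exp |x| (abs_nonneg x) k
  rw [div_le_iff₀ (by positivity)] at this
  nlinarith [Nat.factorial_pos k]

theorem Real.inv_cosh_le_six_mul_inv_one_add_sq (x : ℝ) : (cosh x)⁻¹ ≤ 6 * (1 + x ^ 2)⁻¹ := by
  have h0 := pow_abs_le_two_mul_factorial_mul_cosh 0 x
  have h2 := pow_abs_le_two_mul_factorial_mul_cosh 2 x
  rw [sq_abs] at h2
  norm_num [factorial] at h0 h2
  calc (cosh x)⁻¹ ≤ ((1 + x ^ 2) / 6)⁻¹ := inv_anti₀ (by positivity) (by linarith)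
    _ = 6 * (1 + x ^ 2)⁻¹ := by rw [inv_div, div_eq_mul_inv]

theorem Real.integrable_inv_cosh : Integrable fun x ↦ (cosh x)⁻¹ :=
  (integrable_inv_one_add_sq.const_mul 6).mono' (by fun_prop) <| .of_forall fun x ↦ by
    rw [norm_inv, norm_of_nonneg (cosh_pos x).le]
    exact inv_cosh_le_six_mul_inv_one_add_sq x

theorem Real.integrable_inv_cosh_pow {n : ℕ} (hn : n ≠ 0) :
    Integrable fun x ↦ (cosh x)⁻¹ ^ n :=
  integrable_inv_cosh.mono' (by fun_prop) <| .of_forall fun x ↦ by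
    have h := cosh_pos x
    rw [norm_pow, norm_inv, norm_of_nonneg h.le]
    exact pow_le_of_le_one (by positivity) (inv_le_one_of_one_le₀ (one_le_cosh x)) hn

theorem Real.tendsto_sinh_atTop : Tendsto sinh atTop atTop :=
  tendsto_atTop_mono' _ ((eventually_ge_atTop 0).mono fun _ ↦ self_le_sinh_iff.2) tendsto_id

theorem Real.tendsto_sinh_atBot : Tendsto sinh atBot atBot := by
  simpa [Function.comp_def] using
    tendsto_neg_atTop_atBot.comp (tendsto_sinh_atTop.comp tendsto_neg_atBot_atTop)

theorem Real.hasDerivAt_arctan_sinh (x : ℝ) :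
    HasDerivAt (fun y ↦ arctan (sinh y)) (cosh x)⁻¹ x := by
  refine ((hasDerivAt_arctan _).comp x (hasDerivAt_sinh x)).congr_deriv ?_
  have := (cosh_pos x).ne'
  rw [← cosh_sq']
  field_simp

theorem Real.integral_inv_cosh : ∫ x, (cosh x)⁻¹ = π := by
  rw [integral_of_hasDerivAt_of_tendsto hasDerivAt_arctan_sinh integrable_inv_cosh
    ((tendsto_nhds_of_tendsto_nhdsWithin tendsto_arctan_atBot).comp tendsto_sinh_atBot)
    ((tendsto_nhds_of_tendsto_nhdsWithin tendsto_arctan_atTop).comp tendsto_sinh_atTop)]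
  ring

theorem Real.tendsto_cosh_atTop : Tendsto cosh atTop atTop :=
  tendsto_atTop_mono (fun x ↦ (sinh_lt_cosh x).le) tendsto_sinh_atTop

theorem Real.tendsto_cosh_atBot : Tendsto cosh atBot atTop := by
  simpa [Function.comp_def] using tendsto_cosh_atTop.comp tendsto_neg_atBot_atTop

theorem Real.tendsto_sinh_div_cosh_sq {l : Filter ℝ} (h : Tendsto cosh l atTop) :
    Tendsto (fun x ↦ sinh x / cosh x ^ 2) l (𝓝 0) := by
  refine squeeze_zero_norm (fun x ↦ ?_) h.inv_tendsto_atTop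
  have hc := cosh_pos x
  rw [norm_div, norm_pow, norm_of_nonneg hc.le, norm_eq_abs]
  calc |sinh x| / cosh x ^ 2 ≤ cosh x / cosh x ^ 2 := by
        gcongr
        rw [abs_sinh, ← cosh_abs x]
        exact (sinh_lt_cosh _).le
    _ = (cosh x)⁻¹ := by field_simp

theorem Real.hasDerivAt_half_sinh_div_cosh_sq_add_arctan_sinh (x : ℝ) :
    HasDerivAt (fun y ↦ (sinh y / cosh y ^ 2 + arctan (sinh y)) / 2) ((cosh x)⁻¹ ^ 3) x := by
  have hc := (cosh_pos x).ne'
  have hsq : HasDerivAt (fun y ↦ cosh y ^ 2) (2 * cosh x ^ 1 * sinh x) x :=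
    (hasDerivAt_cosh x).fun_pow 2
  refine ((((hasDerivAt_sinh x).div hsq (by positivity)).add
    (hasDerivAt_arctan_sinh x)).div_const 2).congr_deriv ?_
  field_simp
  linear_combination 2 * cosh_sq x

theorem Real.integral_inv_cosh_pow_three : ∫ x, (cosh x)⁻¹ ^ 3 = π / 2 := by
  have hbot := (tendsto_nhds_of_tendsto_nhdsWithin tendsto_arctan_atBot).comp tendsto_sinh_atBot
  have htop := (tendsto_nhds_of_tendsto_nhdsWithin tendsto_arctan_atTop).comp tendsto_sinh_atTop
  rw [integral_of_hasDerivAt_of_tendsto hasDerivAt_half_sinh_div_cosh_sq_add_arctan_sinh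
    (integrable_inv_cosh_pow three_ne_zero)
    (((tendsto_sinh_div_cosh_sq tendsto_cosh_atBot).add hbot).div_const 2)
    (((tendsto_sinh_div_cosh_sq tendsto_cosh_atTop).add htop).div_const 2)]
  ring

theorem Real.integral_inv_cosh_mul_tanh_sq : ∫ x, (cosh x)⁻¹ * tanh x ^ 2 = π / 2 := by
  have h (x : ℝ) : (cosh x)⁻¹ * tanh x ^ 2 = (cosh x)⁻¹ - (cosh x)⁻¹ ^ 3 := by
    have := (cosh_pos x).ne'
    rw [tanh_eq_sinh_div_cosh]
    field_simp
    linear_combination -cosh_sq_sub_sinh_sq x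
  simp_rw [h]
  rw [integral_sub integrable_inv_cosh (integrable_inv_cosh_pow three_ne_zero), integral_inv_cosh,
    integral_inv_cosh_pow_three]
  ring

def sqrtSech (x : ℝ) : ℝ := cosh x ^ (-(1 / 2) : ℝ)

theorem sqrtSech_pos (x : ℝ) : 0 < sqrtSech x := rpow_pos_of_pos (cosh_pos x) _

theorem sqrtSech_sq (x : ℝ) : sqrtSech x ^ 2 = (cosh x)⁻¹ := by
  rw [sqrtSech, ← rpow_natCast, ← rpow_mul (cosh_pos x).le]
  norm_num [rpow_neg_one]

theorem hasDerivAt_sqrtSech (x : ℝ) :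
    HasDerivAt sqrtSech (-(sqrtSech x * tanh x) / 2) x := by
  have hc := cosh_pos x
  refine ((hasDerivAt_cosh x).rpow_const (p := -(1 / 2)) (Or.inl hc.ne')).congr_deriv ?_
  rw [sqrtSech, tanh_eq_sinh_div_cosh, show (-(1 / 2) : ℝ) - 1 = -(1 / 2) + -1 by ring,
    rpow_add hc, rpow_neg_one]
  field_simp

theorem contDiff_sqrtSech : ContDiff ℝ ∞ sqrtSech :=
  contDiff_iff_contDiffAt.2 fun x ↦
    (contDiffAt_rpow_const_of_ne (cosh_pos x).ne').comp x contDiff_cosh.contDiffAt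

theorem exists_iteratedDeriv_sqrtSech_eq (n : ℕ) :
    ∃ P : ℝ[X], ∀ x, iteratedDeriv n sqrtSech x = sqrtSech x * P.eval (tanh x) := by
  induction n with
  | zero => exact ⟨1, by simp⟩
  | succ n ih =>
    obtain ⟨P, hP⟩ := ih
    refine ⟨C (-(1 / 2)) * (X * P) + (1 - X ^ 2) * derivative P, fun x ↦ ?_⟩
    have hd : HasDerivAt (fun y ↦ sqrtSech y * P.eval (tanh y)) _ x :=
      (hasDerivAt_sqrtSech x).mul ((P.hasDerivAt _).comp x (hasDerivAt_tanh x))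
    rw [iteratedDeriv_succ, funext hP, hd.deriv]
    simp only [eval_add, eval_mul, eval_sub, eval_pow, eval_X, eval_C, eval_one]
    ring

theorem pow_abs_mul_sqrtSech_le (k : ℕ) (x : ℝ) :
    |x| ^ k * sqrtSech x ≤ √(2 * (2 * k)!) := by
  have hx : 0 ≤ |x| ^ k * sqrtSech x := by have := sqrtSech_pos x; positivity
  rw [le_sqrt hx (by positivity), mul_pow, sqrtSech_sq, ← pow_mul, mul_comm k,
    mul_inv_le_iff₀ (cosh_pos x)]
  exact pow_abs_le_two_mul_factorial_mul_cosh (2 * k) x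

def sqrtSechSchwartz : 𝓢(ℝ, ℝ) where
  toFun := sqrtSech
  smooth' := contDiff_sqrtSech
  decay' k n := by
    obtain ⟨P, hP⟩ := exists_iteratedDeriv_sqrtSech_eq n
    obtain ⟨B, hB⟩ := isCompact_Icc.exists_bound_of_continuousOn
      (P.continuous (R := ℝ)).continuousOn (s := Icc (-1) 1)
    refine ⟨√(2 * (2 * k)!) * B, fun x ↦ ?_⟩
    have hPB : |P.eval (tanh x)| ≤ B :=
      hB _ ⟨(neg_one_lt_tanh x).le, (tanh_lt_one x).le⟩
    rw [norm_iteratedFDeriv_eq_norm_iteratedDeriv, hP, norm_eq_abs, norm_eq_abs, abs_mul,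
      abs_of_pos (sqrtSech_pos x), ← mul_assoc]
    exact mul_le_mul (pow_abs_mul_sqrtSech_le k x) hPB (abs_nonneg _) (sqrt_nonneg _)

theorem sqrtSechSchwartz_apply (x : ℝ) : sqrtSechSchwartz x = sqrtSech x := rfl

theorem deriv_sqrtSech : deriv sqrtSech = fun x ↦ -(sqrtSech x * tanh x) / 2 :=
  funext fun x ↦ (hasDerivAt_sqrtSech x).deriv

theorem integral_sqrtSech_sq : ∫ x, sqrtSech x ^ 2 = π := by
  simp_rw [sqrtSech_sq, integral_inv_cosh]

theorem integral_deriv_sqrtSech_sq : ∫ x, deriv sqrtSech x ^ 2 = π / 8 := by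
  have h (x : ℝ) : deriv sqrtSech x ^ 2 = (cosh x)⁻¹ * tanh x ^ 2 / 4 := by
    rw [deriv_sqrtSech, ← sqrtSech_sq]
    ring
  simp_rw [h]
  rw [integral_div, integral_inv_cosh_mul_tanh_sq]
  ring

theorem integral_sqrtSech_pow_six : ∫ x, sqrtSech x ^ 6 = π / 2 := by
  simp_rw [show ∀ x, sqrtSech x ^ 6 = (sqrtSech x ^ 2) ^ 3 from fun x ↦ by ring, sqrtSech_sq,
    integral_inv_cosh_pow_three]

def scaledSqrtSech (c : ℝ) : 𝓢(ℝ, ℂ) :=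
  SchwartzMap.postcompCLM Complex.ofRealCLM (c • sqrtSechSchwartz)

theorem norm_scaledSqrtSech (c x : ℝ) : ‖scaledSqrtSech c x‖ = |c| * sqrtSech x := by
  simp [scaledSqrtSech, sqrtSechSchwartz_apply, abs_of_pos (sqrtSech_pos x)]

theorem norm_deriv_scaledSqrtSech (c x : ℝ) :
    ‖deriv (fun y ↦ scaledSqrtSech c y) x‖ = |c| * |deriv sqrtSech x| := by
  have h : HasDerivAt (fun y ↦ scaledSqrtSech c y) ((c * deriv sqrtSech x : ℝ) : ℂ) x :=
    (((hasDerivAt_sqrtSech x).const_mul c).ofReal_comp).congr_deriv (by rw [deriv_sqrtSech])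
  rw [h.deriv, Complex.norm_real, norm_mul, norm_eq_abs, norm_eq_abs]

theorem integral_norm_scaledSqrtSech_sq (c : ℝ) :
    ∫ x, ‖scaledSqrtSech c x‖ ^ 2 = c ^ 2 * π := by
  simp_rw [norm_scaledSqrtSech, mul_pow, sq_abs, integral_const_mul, integral_sqrtSech_sq]

theorem integral_norm_deriv_scaledSqrtSech_sq (c : ℝ) :
    ∫ x, ‖deriv (fun y ↦ scaledSqrtSech c y) x‖ ^ 2 = c ^ 2 * (π / 8) := by
  simp_rw [norm_deriv_scaledSqrtSech, mul_pow, sq_abs, integral_const_mul,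
    integral_deriv_sqrtSech_sq]

theorem integral_norm_scaledSqrtSech_pow_six (c : ℝ) :
    ∫ x, ‖scaledSqrtSech c x‖ ^ 6 = c ^ 6 * (π / 2) := by
  simp_rw [norm_scaledSqrtSech, mul_pow, (by decide : Even 6).pow_abs, integral_const_mul,
    integral_sqrtSech_pow_six]

/-- For every `ε > 0` there is a Schwartz function with mass `< 2π + ε`
and strictly negative energy `E(f) = ∫|f′|² − (1/16)∫|f|⁶ < 0`. -/
theorem exists_negative_energy_small_mass (ε : ℝ) (hε : 0 < ε) :
    ∃ f : SchwartzMap ℝ ℂ,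
      (∫ x : ℝ, ‖f x‖ ^ 2) < 2 * Real.pi + ε ∧
      (∫ x : ℝ, ‖deriv (fun y : ℝ => f y) x‖ ^ 2)
        - (1/16) * (∫ x : ℝ, ‖f x‖ ^ 6) < 0 := by
  obtain ⟨c, hc⟩ : ∃ c : ℝ, c ^ 2 = 2 + ε / 4 := ⟨√(2 + ε / 4), sq_sqrt (by positivity)⟩
  refine ⟨scaledSqrtSech c, ?_, ?_⟩
  · rw [integral_norm_scaledSqrtSech_sq, hc]
    nlinarith [pi_lt_four]
  · rw [integral_norm_deriv_scaledSqrtSech_sq, integral_norm_scaledSqrtSech_pow_six,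
      show c ^ 6 = (c ^ 2) ^ 3 by ring, hc]
    nlinarith [mul_pos (mul_pos pi_pos hε) (by positivity : 0 < 2 + ε / 4)]
end
end
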